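/- Let E be a finite-dimensional real inner product space, let A : E → E' be a linear map into a finite-dimensional real vector space E', let z ∈ E, and let S be a nonempty closed convex subset of E with S ⊆ {s ∈ E : A(s − z) = 0}. Let F : E → ℝ be differentiable, let μ ∈ E', and define the linearized Lagrangian L(s) = F(s) + ⟨μ, A(s − z)⟩. Fix v ∈ S, let w* ∈ S be the point of S nearest to v − ∇F(v) (the minimizer over S of w ↦ ½‖v − ∇F(v) − w‖²), and set r = w* − v. Then: (i) v + α r ∈ S for every α ∈ [0, 1] (r is a feasible direction at v), and (ii) if r ≠ 0, then ⟨r, ∇L(v)⟩ = ⟨r, ∇F(v)⟩ < 0, i.e. r is a descent direction for L at v. -/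
import Mathlib


open RealInnerProductSpace

/-- Lemma 1 of the paper: the projected-gradient direction `r = w* - v` is a feasible
direction at `v` for the nonempty closed convex set `S ⊆ {s | A (s - z) = 0}`, and if
`r ≠ 0` it is a descent direction for the linearized Lagrangian
`L s = F s + ⟪μ, A (s - z)⟫`. -/
theorem stmt0
    {E E' : Type*} [NormedAddCommGroup E] [InnerProductSpace ℝ E] [FiniteDimensional ℝ E]
    [NormedAddCommGroup E'] [InnerProductSpace ℝ E'] [FiniteDimensional ℝ E']
    (A : E →ₗ[ℝ] E') (z : E) (S : Set E)
    (hSne : S.Nonempty) (hScl : IsClosed S) (hScv : Convex ℝ S)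
    (hSsub : S ⊆ {s : E | A (s - z) = 0})
    (F : E → ℝ) (hF : Differentiable ℝ F) (μ : E')
    (v : E) (hv : v ∈ S)
    (wstar : E) (hw : wstar ∈ S)
    (hmin : ∀ u ∈ S,
      (1 / 2 : ℝ) * ‖v - gradient F v - wstar‖ ^ 2 ≤ (1 / 2 : ℝ) * ‖v - gradient F v - u‖ ^ 2) :
    (∀ α : ℝ, α ∈ Set.Icc (0 : ℝ) 1 → v + α • (wstar - v) ∈ S) ∧
      (wstar - v ≠ 0 →
        ⟪wstar - v, gradient (fun s : E => F s + ⟪μ, A (s - z)⟫) v⟫ =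
            ⟪wstar - v, gradient F v⟫ ∧
          ⟪wstar - v, gradient F v⟫ < 0) := by
  set g : E := gradient F v with hg
  set r : E := wstar - v with hr
  constructor
  · intro α hα
    have : v + α • (wstar - v) = (1 - α) • v + α • wstar := by
      rw [smul_sub]; module
    rw [this]
    exact hScv hv hw (by linarith [hα.2]) hα.1 (by ring)
  · intro hrne
    -- r is in the kernel of A
    have hAr : A r = 0 := by
      have h1 : A (wstar - z) = 0 := hSsub hw
      have h2 : A (v - z) = 0 := hSsub hv
      have : r = (wstar - z) - (v - z) := by rw [hr]; abel
      rw [this, map_sub, h1, h2, sub_zero]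
    -- compute the gradient of L
    set a : E := LinearMap.adjoint A μ with ha
    have hginner : ∀ s : E, ⟪μ, A (s - z)⟫ = ⟪a, s⟫ - ⟪a, z⟫ := by
      intro s
      rw [ha, ← LinearMap.adjoint_inner_left, inner_sub_right]
    have hGgrad : HasGradientAt (fun s : E => ⟪μ, A (s - z)⟫) a v := by
      rw [hasGradientAt_iff_hasFDerivAt]
      have h1 : HasFDerivAt (fun s : E => (InnerProductSpace.toDual ℝ E a) s - ⟪a, z⟫)
          (InnerProductSpace.toDual ℝ E a) v :=
        (InnerProductSpace.toDual ℝ E a).hasFDerivAt.sub_const _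
      refine h1.congr_of_eventuallyEq (Filter.Eventually.of_forall fun s => ?_)
      simp only [InnerProductSpace.toDual_apply_apply]
      exact hginner s
    have hFgrad : HasGradientAt F g v := (hF v).hasGradientAt
    have hLgrad : HasGradientAt (fun s : E => F s + ⟪μ, A (s - z)⟫) (g + a) v := by
      rw [hasGradientAt_iff_hasFDerivAt, map_add]
      exact (hasGradientAt_iff_hasFDerivAt.mp hFgrad).add
        (hasGradientAt_iff_hasFDerivAt.mp hGgrad)
    have hLg : gradient (fun s : E => F s + ⟪μ, A (s - z)⟫) v = g + a := hLgrad.gradient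
    have hra : ⟪r, a⟫ = 0 := by
      rw [ha, LinearMap.adjoint_inner_right, hAr, inner_zero_left]
    have heq : ⟪r, g + a⟫ = ⟪r, g⟫ := by rw [inner_add_right, hra, add_zero]
    -- variational inequality: c := ⟪v - g - wstar, r⟫ ≥ 0
    have hkey : ∀ t : ℝ, 0 < t → t ≤ 1 →
        0 ≤ 2 * t * ⟪v - g - wstar, r⟫ + t ^ 2 * ‖r‖ ^ 2 := by
      intro t ht0 ht1
      have hmem : wstar + t • (v - wstar) ∈ S := by
        have : wstar + t • (v - wstar) = (1 - t) • wstar + t • v := by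
          rw [smul_sub]; module
        rw [this]
        exact hScv hw hv (by linarith) ht0.le (by ring)
      have := hmin _ hmem
      have hexp : ‖v - g - (wstar + t • (v - wstar))‖ ^ 2
          = ‖v - g - wstar‖ ^ 2 + 2 * t * ⟪v - g - wstar, r⟫ + t ^ 2 * ‖r‖ ^ 2 := by
        have h1 : v - g - (wstar + t • (v - wstar)) = (v - g - wstar) + t • r := by
          rw [hr]; rw [smul_sub, smul_sub]; abel
        rw [h1, norm_add_sq_real, real_inner_smul_right, norm_smul, Real.norm_eq_abs,
          mul_pow, sq_abs]
        ring
      rw [hexp] at this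
      nlinarith [this]
    have hc : 0 ≤ ⟪v - g - wstar, r⟫ := by
      by_contra hneg
      push_neg at hneg
      set c : ℝ := ⟪v - g - wstar, r⟫
      have hrn0 : ‖r‖ ≠ 0 := norm_ne_zero_iff.mpr hrne
      have hrnorm : (0 : ℝ) < ‖r‖ ^ 2 := by positivity
      set t : ℝ := min 1 (-c / ‖r‖ ^ 2) with htdef
      have ht0 : 0 < t := lt_min one_pos (div_pos (by linarith) hrnorm)
      have ht1 : t ≤ 1 := min_le_left _ _
      have ht2 : t ≤ -c / ‖r‖ ^ 2 := min_le_right _ _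
      have := hkey t ht0 ht1
      have htle : t * ‖r‖ ^ 2 ≤ -c := by
        rw [← div_mul_cancel₀ (-c) (ne_of_gt hrnorm)]
        exact mul_le_mul_of_nonneg_right ht2 hrnorm.le
      nlinarith
    -- unpack c ≥ 0
    have hveq : v - g - wstar = -g - r := by rw [hr]; abel
    rw [hveq, sub_eq_add_neg, inner_add_left, inner_neg_left, inner_neg_left,
      real_inner_self_eq_norm_sq] at hc
    have hrn0 : ‖r‖ ≠ 0 := norm_ne_zero_iff.mpr hrne
    have hrpos : (0 : ℝ) < ‖r‖ ^ 2 := by positivity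
    have hdesc : ⟪r, g⟫ < 0 := by
      rw [real_inner_comm]; linarith
    exact ⟨by rw [hLg, heq], hdesc⟩
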